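/- arXiv:2010.03250 — 4 statements merged into one kernel-verified Lean document; each statement's English description precedes it below -/
import Mathlib

section
/- Let α : Fin n → ℝ with a unique maximizer m* and let h(q; t) = exp(α q / t) / Σ_p exp(α p / t). Fix m : Fin n with m ≠ m*. Then (1/t)·h(m*;t)·(δ_{m*,m} − h(m;t)) → 0 as t → 0⁺. -/
open Real Filter

lemma aux_mul_exp_neg {c : ℝ} (hc : 0 < c) :
    Tendsto (fun u : ℝ => u * Real.exp (-(c * u))) atTop (nhds 0) := by
  have h1 : Tendsto (fun u : ℝ => c * u) atTop atTop :=
    tendsto_id.const_mul_atTop hc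
  have h2 := (tendsto_pow_mul_exp_neg_atTop_nhds_zero 1).comp h1
  have h3 := h2.const_mul (1 / c)
  simp only [mul_zero] at h3
  refine h3.congr (fun u => ?_)
  simp only [Function.comp, pow_one]
  field_simp

theorem softmax_deriv_offmax_tendsto_zero (n : ℕ) (hn : 0 < n) (α : Fin n → ℝ)
    (mstar : Fin n) (hmax : ∀ p : Fin n, p ≠ mstar → α p < α mstar)
    (m : Fin n) (hm : m ≠ mstar) :
    Tendsto
      (fun t : ℝ =>
        (1 / t) * (Real.exp (α mstar / t) / ∑ p : Fin n, Real.exp (α p / t)) *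
          ((if mstar = m then (1 : ℝ) else 0) -
            Real.exp (α m / t) / ∑ p : Fin n, Real.exp (α p / t)))
      (nhdsWithin 0 (Set.Ioi 0)) (nhds 0) := by
  have hc : (0:ℝ) < α mstar - α m := by linarith [hmax m hm]
  set c := α mstar - α m with hcdef
  -- the bounding function
  have hg : Tendsto (fun t : ℝ => (1 / t) * Real.exp (-(c * (1 / t))))
      (nhdsWithin 0 (Set.Ioi 0)) (nhds 0) := by
    have := (aux_mul_exp_neg hc).comp tendsto_inv_nhdsGT_zero
    refine this.congr (fun t => ?_)
    simp [Function.comp, one_div]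
  refine squeeze_zero_norm' ?_ hg
  filter_upwards [self_mem_nhdsWithin] with t ht
  have ht' : (0:ℝ) < t := ht
  have hifm : (if mstar = m then (1:ℝ) else 0) = 0 := by
    simp [Ne.symm hm]
  -- denominator bounds
  set S := ∑ p : Fin n, Real.exp (α p / t) with hS
  have hSpos : 0 < S := Finset.sum_pos (fun p _ => Real.exp_pos _) ⟨mstar, Finset.mem_univ _⟩
  have hSge : Real.exp (α mstar / t) ≤ S :=
    Finset.single_le_sum (f := fun p => Real.exp (α p / t)) (fun p _ => (Real.exp_pos _).le) (Finset.mem_univ mstar)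
  have hH1 : Real.exp (α mstar / t) / S ≤ 1 := by
    rw [div_le_one hSpos]; exact hSge
  have hHm : Real.exp (α m / t) / S ≤ Real.exp (-(c * (1 / t))) := by
    have h1 : Real.exp (α m / t) / S ≤ Real.exp (α m / t) / Real.exp (α mstar / t) :=
      div_le_div_of_nonneg_left (Real.exp_pos _).le (Real.exp_pos _) hSge
    rw [← Real.exp_sub] at h1
    refine h1.trans_eq ?_
    congr 1
    field_simp [hcdef]
    linarith
  rw [hifm]
  have habs : ‖(1 / t) * (Real.exp (α mstar / t) / S) * (0 - Real.exp (α m / t) / S)‖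
      = (1 / t) * (Real.exp (α mstar / t) / S) * (Real.exp (α m / t) / S) := by
    rw [Real.norm_eq_abs, abs_mul, abs_mul]
    rw [abs_of_pos (by positivity), abs_of_pos (by positivity)]
    rw [zero_sub, abs_neg, abs_of_pos (by positivity)]
  rw [habs]
  calc (1 / t) * (Real.exp (α mstar / t) / S) * (Real.exp (α m / t) / S)
      ≤ (1 / t) * 1 * Real.exp (-(c * (1 / t))) := by
        apply mul_le_mul
        · exact mul_le_mul_of_nonneg_left hH1 (by positivity)
        · exact hHm
        · positivity
        · positivity
    _ = (1 / t) * Real.exp (-(c * (1 / t))) := by ring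
end

section
/- Let g : Fin n → ℝ be any fixed vector (representing ∂L/∂ᾱ), let α : Fin n → ℝ have unique strict maximizer m*, and let h be the temperature-t softmax. Then the limit as t → 0⁺ of Σ_q g q · (δ_{qm} h(q;t) + α q · D_m h(q;t)) equals g m* when m = m* and equals 0 when m ≠ m*, where D_m h(q;t) = (1/t)·h(q;t)·(δ_{qm} − h(m;t)) is the partial derivative of h(q;t) in α m. -/
open Real Filter

private lemma aux_exp_div (c : ℝ) (hc : c < 0) :
    Tendsto (fun t : ℝ => Real.exp (c / t)) (nhdsWithin 0 (Set.Ioi 0)) (nhds 0) := by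
  have h1 : Tendsto (fun t : ℝ => c / t) (nhdsWithin 0 (Set.Ioi 0)) atBot := by
    have h2 : Tendsto (fun t : ℝ => (-c) * t⁻¹) (nhdsWithin 0 (Set.Ioi 0)) atTop :=
      tendsto_inv_nhdsGT_zero.const_mul_atTop (by linarith)
    refine (tendsto_neg_atTop_atBot.comp h2).congr fun t => ?_
    simp only [Function.comp]; ring
  exact Real.tendsto_exp_atBot.comp h1

private lemma aux_inv_exp_div (c : ℝ) (hc : c < 0) :
    Tendsto (fun t : ℝ => (1 / t) * Real.exp (c / t)) (nhdsWithin 0 (Set.Ioi 0)) (nhds 0) := by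
  have hc' : c ≠ 0 := ne_of_lt hc
  have hphi : Tendsto (fun t : ℝ => (-c) * t⁻¹) (nhdsWithin 0 (Set.Ioi 0)) atTop :=
    tendsto_inv_nhdsGT_zero.const_mul_atTop (by linarith)
  have h1 : Tendsto (fun x : ℝ => x * Real.exp (-x)) atTop (nhds 0) := by
    simpa using tendsto_pow_mul_exp_neg_atTop_nhds_zero 1
  have h2 := (h1.comp hphi).const_mul (-(1/c))
  rw [mul_zero] at h2
  refine h2.congr fun t => ?_
  simp only [Function.comp]
  have e1 : -(-c * t⁻¹) = c / t := by ring
  rw [e1]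
  calc -(1/c) * (-c * t⁻¹ * Real.exp (c/t)) = (1/c * c) * (t⁻¹ * Real.exp (c/t)) := by ring
    _ = 1/t * Real.exp (c/t) := by rw [one_div_mul_cancel hc', one_mul, one_div]

theorem grad_through_softmax_argmax (n : ℕ) (hn : 0 < n) (g α : Fin n → ℝ)
    (mstar : Fin n) (hmax : ∀ p : Fin n, p ≠ mstar → α p < α mstar)
    (m : Fin n) :
    Tendsto
      (fun t : ℝ =>
        ∑ q : Fin n,
          g q *
            ((if q = m then (1 : ℝ) else 0) *
                (Real.exp (α q / t) / ∑ p : Fin n, Real.exp (α p / t)) +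
              α q *
                ((1 / t) * (Real.exp (α q / t) / ∑ p : Fin n, Real.exp (α p / t)) *
                  ((if q = m then (1 : ℝ) else 0) -
                    Real.exp (α m / t) / ∑ p : Fin n, Real.exp (α p / t)))))
      (nhdsWithin 0 (Set.Ioi 0))
      (nhds (if m = mstar then g mstar else 0)) := by
  have hne : Nonempty (Fin n) := Fin.pos_iff_nonempty.mp hn
  set S : ℝ → ℝ := fun t => ∑ p : Fin n, Real.exp (α p / t) with hS
  set D : ℝ → ℝ := fun t => ∑ p : Fin n, Real.exp ((α p - α mstar) / t) with hDdef
  have hSpos : ∀ t, 0 < S t := fun t =>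
    Finset.sum_pos (fun p _ => Real.exp_pos _) Finset.univ_nonempty
  have hDpos : ∀ t, 0 < D t := fun t =>
    Finset.sum_pos (fun p _ => Real.exp_pos _) Finset.univ_nonempty
  -- limit of the shifted exponentials
  have hE : ∀ q : Fin n, Tendsto (fun t : ℝ => Real.exp ((α q - α mstar) / t))
      (nhdsWithin 0 (Set.Ioi 0)) (nhds (if q = mstar then 1 else 0)) := by
    intro q
    by_cases hq : q = mstar
    · subst hq
      simp only [sub_self, zero_div, Real.exp_zero, if_pos rfl]
      exact tendsto_const_nhds
    · rw [if_neg hq]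
      exact aux_exp_div _ (by have := hmax q hq; linarith)
  have hD : Tendsto D (nhdsWithin 0 (Set.Ioi 0)) (nhds 1) := by
    have h := tendsto_finset_sum Finset.univ (fun q (_ : q ∈ Finset.univ) => hE q)
    simpa [Finset.sum_ite_eq'] using h
  -- rewriting the softmax on positive t
  have hh : ∀ q : Fin n, ∀ t ∈ Set.Ioi (0:ℝ),
      Real.exp (α q / t) / S t = Real.exp ((α q - α mstar) / t) / D t := by
    intro q t _
    rw [div_eq_div_iff (hSpos t).ne' (hDpos t).ne']
    simp only [hS, hDdef, Finset.mul_sum]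
    refine Finset.sum_congr rfl fun p _ => ?_
    rw [← Real.exp_add, ← Real.exp_add, ← add_div, ← add_div]
    ring_nf
  have hmemIoi : ∀ᶠ t in nhdsWithin (0:ℝ) (Set.Ioi 0), t ∈ Set.Ioi (0:ℝ) :=
    eventually_mem_nhdsWithin
  -- softmax limit
  have hq_tendsto : ∀ q : Fin n, Tendsto (fun t : ℝ => Real.exp (α q / t) / S t)
      (nhdsWithin 0 (Set.Ioi 0)) (nhds (if q = mstar then 1 else 0)) := by
    intro q
    have h := (hE q).div hD one_ne_zero
    rw [div_one] at h
    exact h.congr' (hmemIoi.mono fun t ht => (hh q t ht).symm)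
  -- (1/t) * softmax → 0 for non-maximizers
  have hinv : ∀ q : Fin n, q ≠ mstar →
      Tendsto (fun t : ℝ => (1 / t) * (Real.exp (α q / t) / S t))
        (nhdsWithin 0 (Set.Ioi 0)) (nhds 0) := by
    intro q hq
    have hnum := aux_inv_exp_div (α q - α mstar) (by have := hmax q hq; linarith)
    have h := hnum.div hD one_ne_zero
    rw [zero_div] at h
    refine h.congr' (hmemIoi.mono fun t ht => ?_)
    show (1 / t * Real.exp ((α q - α mstar) / t)) / D t = 1 / t * (Real.exp (α q / t) / S t)
    rw [hh q t ht, mul_div_assoc]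
  -- (1/t) * (D t - 1) → 0
  have hDsub : Tendsto (fun t : ℝ => (1 / t) * (D t - 1))
      (nhdsWithin 0 (Set.Ioi 0)) (nhds 0) := by
    have key : ∀ t : ℝ, D t - 1 = ∑ p ∈ Finset.univ.erase mstar, Real.exp ((α p - α mstar) / t) := by
      intro t
      have := Finset.add_sum_erase Finset.univ (fun p => Real.exp ((α p - α mstar) / t))
        (Finset.mem_univ mstar)
      rw [hDdef]
      simp only [sub_self, zero_div, Real.exp_zero] at this ⊢
      rw [← this]; ring
    have h := tendsto_finset_sum (Finset.univ.erase mstar)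
      (fun p (hp : p ∈ Finset.univ.erase mstar) =>
        aux_inv_exp_div (α p - α mstar)
          (by have := hmax p (Finset.mem_erase.mp hp).1; linarith))
    rw [Finset.sum_const_zero] at h
    refine h.congr fun t => ?_
    rw [key t, Finset.mul_sum]
  -- the derivative term tends to 0
  have hP : ∀ q : Fin n,
      Tendsto (fun t : ℝ => (1 / t) * (Real.exp (α q / t) / S t) *
          ((if q = m then (1:ℝ) else 0) - Real.exp (α m / t) / S t))
        (nhdsWithin 0 (Set.Ioi 0)) (nhds 0) := by
    intro q
    by_cases hq : q = mstar
    · by_cases hm : m = mstar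
      · -- q = m = mstar
        have hqm : q = m := hq.trans hm.symm
        have h := hDsub.mul ((hD.inv₀ one_ne_zero).mul (hD.inv₀ one_ne_zero))
        rw [zero_mul] at h
        refine h.congr' (hmemIoi.mono fun t ht => ?_)
        show (1 / t * (D t - 1)) * ((D t)⁻¹ * (D t)⁻¹) =
          1 / t * (Real.exp (α q / t) / S t) *
            ((if q = m then (1:ℝ) else 0) - Real.exp (α m / t) / S t)
        rw [if_pos hqm, hh q t ht, hh m t ht, hq, hm]
        simp only [sub_self, zero_div, Real.exp_zero]
        have hD0 : D t ≠ 0 := (hDpos t).ne'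
        field_simp
      · -- q = mstar ≠ m
        have hqm : q ≠ m := fun h => hm (h.symm.trans hq)
        have h := (hq_tendsto q).mul ((hinv m hm).neg)
        rw [neg_zero, mul_zero] at h
        refine h.congr fun t => ?_
        rw [if_neg hqm]; ring
    · -- q ≠ mstar
      have h := (hinv q hq).mul ((tendsto_const_nhds (x := (if q = m then (1:ℝ) else 0))).sub (hq_tendsto m))
      rw [zero_mul] at h
      exact h
  -- per-term limits
  have hterm : ∀ q : Fin n,
      Tendsto (fun t : ℝ =>
          g q * ((if q = m then (1:ℝ) else 0) * (Real.exp (α q / t) / S t) +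
            α q * ((1 / t) * (Real.exp (α q / t) / S t) *
              ((if q = m then (1:ℝ) else 0) - Real.exp (α m / t) / S t))))
        (nhdsWithin 0 (Set.Ioi 0))
        (nhds (g q * ((if q = m then (1:ℝ) else 0) * (if q = mstar then (1:ℝ) else 0) +
          α q * 0))) := by
    intro q
    exact ((tendsto_const_nhds.mul (hq_tendsto q)).add
      (tendsto_const_nhds.mul (hP q))).const_mul (g q)
  have hsum := tendsto_finset_sum Finset.univ (fun q (_ : q ∈ Finset.univ) => hterm q)
  have hval : ∑ q : Fin n, g q * ((if q = m then (1:ℝ) else 0) *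
      (if q = mstar then (1:ℝ) else 0) + α q * 0) =
      if m = mstar then g mstar else 0 := by
    have e : ∀ q : Fin n, g q * ((if q = m then (1:ℝ) else 0) *
        (if q = mstar then (1:ℝ) else 0) + α q * 0) =
        if q = m then (if m = mstar then g mstar else 0) else 0 := by
      intro q
      by_cases h1 : q = m
      · subst h1
        by_cases h2 : q = mstar
        · subst h2; simp
        · simp [h2]
      · simp [h1]
    rw [Finset.sum_congr rfl (fun q _ => e q), Finset.sum_ite_eq']
    simp
  rw [hval] at hsum
  exact hsum
end

section
/- For α : Fin n → ℝ with unique strict maximizer m*, and h the temperature-t softmax, for every q ≠ m* the product α q · h(q; t) · (1/t) tends to 0 as t → 0⁺ (i.e., even divided by t, non-maximal softmax weights vanish). -/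
/-!
The partition sum is at least `exp (α m* / t)`, so the softmax weight of `q` is at most
`exp (-(α m* - α q) / t)`. With `u = 1 / t → ∞` the quantity `u * exp (-c u)` tends to `0`
for every gap `c > 0`: the exponential decay beats the `1 / t` blow-up.
-/

open Real Filter Topology

lemma exp_div_sum_exp_le_exp_sub {ι : Type*} [Fintype ι] (f : ι → ℝ) (i j : ι) :
    exp (f i) / ∑ p, exp (f p) ≤ exp (f i - f j) := by
  have hj : exp (f j) ≤ ∑ p, exp (f p) :=
    Finset.single_le_sum (fun p _ => (exp_pos (f p)).le) (Finset.mem_univ j)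
  rw [exp_sub]
  exact div_le_div_of_nonneg_left (exp_pos _).le (exp_pos _) hj

lemma tendsto_exp_neg_div_mul_inv_nhdsGT_zero {c : ℝ} (hc : 0 < c) :
    Tendsto (fun t : ℝ => exp (-c / t) * t⁻¹) (𝓝[>] 0) (𝓝 0) := by
  have hdecay : Tendsto (fun u : ℝ => u * exp (-c * u)) atTop (𝓝 0) := by
    simpa using tendsto_rpow_mul_exp_neg_mul_atTop_nhds_zero 1 c hc
  refine (hdecay.comp tendsto_inv_nhdsGT_zero).congr fun t => ?_
  simp only [Function.comp_apply, div_eq_mul_inv, mul_comm]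

lemma tendsto_softmax_mul_one_div_nhdsGT_zero {ι : Type*} [Fintype ι] {α : ι → ℝ} {q m : ι}
    (hqm : α q < α m) :
    Tendsto (fun t : ℝ => exp (α q / t) / (∑ p, exp (α p / t)) * (1 / t)) (𝓝[>] 0) (𝓝 0) := by
  have hbound : ∀ᶠ t in 𝓝[>] 0, exp (α q / t) / (∑ p, exp (α p / t)) * (1 / t)
      ≤ exp (-(α m - α q) / t) * t⁻¹ := by
    filter_upwards [self_mem_nhdsWithin] with t (ht : 0 < t)
    have hexp : α q / t - α m / t = -(α m - α q) / t := by ring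
    rw [one_div]
    gcongr
    simpa only [hexp] using exp_div_sum_exp_le_exp_sub (fun p => α p / t) q m
  have hnonneg : ∀ᶠ t in 𝓝[>] 0, 0 ≤ exp (α q / t) / (∑ p, exp (α p / t)) * (1 / t) := by
    filter_upwards [self_mem_nhdsWithin] with t (ht : 0 < t)
    positivity
  exact tendsto_of_tendsto_of_tendsto_of_le_of_le' tendsto_const_nhds
    (tendsto_exp_neg_div_mul_inv_nhdsGT_zero (sub_pos.mpr hqm)) hnonneg hbound

theorem softmax_offmax_over_t_tendsto_zero_general (n : ℕ) (α : Fin n → ℝ)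
    (mstar : Fin n) (hmax : ∀ p : Fin n, p ≠ mstar → α p < α mstar)
    (q : Fin n) (hq : q ≠ mstar) :
    Tendsto
      (fun t : ℝ =>
        α q * (Real.exp (α q / t) / ∑ p : Fin n, Real.exp (α p / t)) * (1 / t))
      (nhdsWithin 0 (Set.Ioi 0)) (nhds 0) := by
  simpa only [mul_assoc, mul_zero] using
    (tendsto_softmax_mul_one_div_nhdsGT_zero (hmax q hq)).const_mul (α q)

theorem softmax_offmax_over_t_tendsto_zero (n : ℕ) (hn : 0 < n) (α : Fin n → ℝ)
    (mstar : Fin n) (hmax : ∀ p : Fin n, p ≠ mstar → α p < α mstar)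
    (q : Fin n) (hq : q ≠ mstar) :
    Tendsto
      (fun t : ℝ =>
        α q * (Real.exp (α q / t) / ∑ p : Fin n, Real.exp (α p / t)) * (1 / t))
      (nhdsWithin 0 (Set.Ioi 0)) (nhds 0) :=
  softmax_offmax_over_t_tendsto_zero_general n α mstar hmax q hq
end

section
/- Monotonicity of softmax in temperature at the maximizer: for α : Fin n → ℝ with strict maximizer m* and 0 < t₁ < t₂, the softmax value at the maximizer satisfies h(m*; t₁) > h(m*; t₂), where h(m; t) = exp(α m / t)/Σ_p exp(α p / t), provided n ≥ 2 and not all α values equal α m*. -/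
open Real

/-!
Dividing by the weight `exp (α m* / t)` of the maximizer turns the softmax value at `m*` into
`1 / ∑ p, exp ((α p - α m*) / t)`. Every exponent `α p - α m*` is `≤ 0`, so each summand grows with
the temperature, and strictly so for any `p` with `α p < α m*`.
-/

theorem exp_div_le_exp_div_of_nonpos {x t₁ t₂ : ℝ} (hx : x ≤ 0) (ht₁ : 0 < t₁) (ht : t₁ ≤ t₂) :
    exp (x / t₁) ≤ exp (x / t₂) := by
  rw [exp_le_exp, div_le_div_iff₀ ht₁ (ht₁.trans_le ht)]
  nlinarith

theorem exp_div_lt_exp_div_of_neg {x t₁ t₂ : ℝ} (hx : x < 0) (ht₁ : 0 < t₁) (ht : t₁ < t₂) :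
    exp (x / t₁) < exp (x / t₂) := by
  rw [exp_lt_exp, div_lt_div_iff₀ ht₁ (ht₁.trans ht)]
  nlinarith

section Softmax

variable {ι : Type*} [Fintype ι] (a : ι → ℝ)

theorem exp_div_div_sum_exp_div_eq_inv (i : ι) (t : ℝ) :
    exp (a i / t) / ∑ p, exp (a p / t) = (∑ p, exp ((a p - a i) / t))⁻¹ := by
  have hsum : ∑ p, exp (a p / t) = exp (a i / t) * ∑ p, exp ((a p - a i) / t) := by
    rw [Finset.mul_sum]
    congr 1 with p
    rw [← exp_add, sub_div, add_sub_cancel]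
  rw [hsum, div_mul_cancel_left₀ (exp_ne_zero _)]

theorem sum_exp_sub_div_lt_of_lt {i j : ι} (hle : ∀ k, a k ≤ a i) (hlt : a j < a i)
    {t₁ t₂ : ℝ} (ht₁ : 0 < t₁) (ht : t₁ < t₂) :
    ∑ p, exp ((a p - a i) / t₁) < ∑ p, exp ((a p - a i) / t₂) :=
  Finset.sum_lt_sum
    (fun k _ => exp_div_le_exp_div_of_nonpos (sub_nonpos.mpr (hle k)) ht₁ ht.le)
    ⟨j, Finset.mem_univ j, exp_div_lt_exp_div_of_neg (sub_neg.mpr hlt) ht₁ ht⟩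

end Softmax

theorem softmax_max_antitone_in_temperature_general (n : ℕ) (α : Fin n → ℝ)
    (mstar : Fin n) (hmax : ∀ m : Fin n, m ≠ mstar → α m < α mstar)
    (hne : ∃ m : Fin n, α m ≠ α mstar)
    (t₁ t₂ : ℝ) (ht₁ : 0 < t₁) (ht : t₁ < t₂) :
    Real.exp (α mstar / t₂) / (∑ p : Fin n, Real.exp (α p / t₂)) <
      Real.exp (α mstar / t₁) / (∑ p : Fin n, Real.exp (α p / t₁)) := by
  obtain ⟨m, hm⟩ := hne
  have hle : ∀ k, α k ≤ α mstar := fun k =>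
    (eq_or_ne k mstar).elim (fun h => h ▸ le_rfl) (fun h => (hmax k h).le)
  have hlt : α m < α mstar := hmax m (fun h => hm (h ▸ rfl))
  rw [exp_div_div_sum_exp_div_eq_inv, exp_div_div_sum_exp_div_eq_inv]
  exact inv_strictAnti₀ (Finset.sum_pos (fun p _ => exp_pos _) ⟨mstar, Finset.mem_univ _⟩)
    (sum_exp_sub_div_lt_of_lt α hle hlt ht₁ ht)

theorem softmax_max_antitone_in_temperature (n : ℕ) (hn : 2 ≤ n) (α : Fin n → ℝ)
    (mstar : Fin n) (hmax : ∀ m : Fin n, m ≠ mstar → α m < α mstar)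
    (hne : ∃ m : Fin n, α m ≠ α mstar)
    (t₁ t₂ : ℝ) (ht₁ : 0 < t₁) (ht : t₁ < t₂) :
    Real.exp (α mstar / t₂) / (∑ p : Fin n, Real.exp (α p / t₂)) <
      Real.exp (α mstar / t₁) / (∑ p : Fin n, Real.exp (α p / t₁)) :=
  softmax_max_antitone_in_temperature_general n α mstar hmax hne t₁ t₂ ht₁ ht
end
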